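/- arXiv:2107.06996 — 2 statements merged into one kernel-verified Lean document; each statement's English description precedes it below -/
import Mathlib

section
/- Moreau's decomposition: for a proper closed convex function g on ℝⁿ and any β > 0, every x ∈ ℝⁿ satisfies x = prox_{β g*}(x) + β · prox_{β^{-1} g}(x/β), where g* is the Fenchel conjugate of g. -/
open scoped RealInnerProductSpace

set_option maxHeartbeats 1000000 in
/-- Moreau's decomposition. For a proper, lower semicontinuous, convex
`g : ℝⁿ → ℝ ∪ {+∞}` and `β > 0`, every `x` satisfies
`x = prox_{β g*}(x) + β · prox_{β⁻¹ g}(x/β)`, where the prox points are characterized as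
minimizers of the respective objectives. -/
theorem moreau_decomposition
    (n : ℕ) (β : ℝ) (hβ : 0 < β)
    (g : EuclideanSpace ℝ (Fin n) → EReal)
    (hbot : ∀ v, g v ≠ ⊥) (hproper : ∃ v, g v ≠ ⊤)
    (hlsc : LowerSemicontinuous g)
    (hconv : ∀ (v w : EuclideanSpace ℝ (Fin n)) (a b : ℝ), 0 ≤ a → 0 ≤ b → a + b = 1 →
      g (a • v + b • w) ≤ (a : EReal) * g v + (b : EReal) * g w)
    (gstar : EuclideanSpace ℝ (Fin n) → EReal)
    (hgstar : ∀ z, gstar z = ⨆ v : EuclideanSpace ℝ (Fin n), ((⟪z, v⟫ : ℝ) : EReal) - g v)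
    (x p₁ p₂ : EuclideanSpace ℝ (Fin n))
    (hp₁ : ∀ y, (((1 / 2) * ‖p₁ - x‖ ^ 2 : ℝ) : EReal) + (β : EReal) * gstar p₁
        ≤ (((1 / 2) * ‖y - x‖ ^ 2 : ℝ) : EReal) + (β : EReal) * gstar y)
    (hp₂ : ∀ y, (((1 / 2) * ‖p₂ - β⁻¹ • x‖ ^ 2 : ℝ) : EReal) + ((β⁻¹ : ℝ) : EReal) * g p₂
        ≤ (((1 / 2) * ‖y - β⁻¹ • x‖ ^ 2 : ℝ) : EReal) + ((β⁻¹ : ℝ) : EReal) * g y) :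
    x = p₁ + β • p₂ := by
  have hβi : (0:ℝ) < β⁻¹ := inv_pos.mpr hβ
  obtain ⟨v₀, hv₀⟩ := hproper
  obtain ⟨c₀, hc₀⟩ : ∃ c : ℝ, g v₀ = (c : EReal) :=
    ⟨(g v₀).toReal, (EReal.coe_toReal hv₀ (hbot v₀)).symm⟩
  -- Step 1 : g p₂ is real
  have hgp₂top : g p₂ ≠ ⊤ := by
    intro htop
    have h1 := hp₂ v₀
    rw [htop, hc₀, EReal.coe_mul_top_of_pos hβi, EReal.coe_add_top, ← EReal.coe_mul,
      ← EReal.coe_add, top_le_iff] at h1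
    exact EReal.coe_ne_top _ h1
  obtain ⟨c₂, hc₂⟩ : ∃ c : ℝ, g p₂ = (c : EReal) :=
    ⟨(g p₂).toReal, (EReal.coe_toReal hgp₂top (hbot p₂)).symm⟩
  set s : EuclideanSpace ℝ (Fin n) := x - β • p₂ with hs
  -- Step 2 : subgradient inequality  g v ≥ c₂ + ⟪s, v - p₂⟫
  have key : ∀ v, ((c₂ + ⟪s, v - p₂⟫ : ℝ) : EReal) ≤ g v := by
    intro v
    rcases eq_or_ne (g v) ⊤ with htop | htop
    · rw [htop]; exact le_top
    obtain ⟨cv, hcv⟩ : ∃ c : ℝ, g v = (c : EReal) :=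
      ⟨(g v).toReal, (EReal.coe_toReal htop (hbot v)).symm⟩
    rw [hcv, EReal.coe_le_coe_iff]
    set d : EuclideanSpace ℝ (Fin n) := p₂ - β⁻¹ • x with hd
    set e : EuclideanSpace ℝ (Fin n) := v - p₂ with he
    obtain ⟨A, hAdef⟩ : ∃ A : ℝ, A = ⟪d, e⟫ + β⁻¹ * (cv - c₂) := ⟨_, rfl⟩
    obtain ⟨B, hBdef⟩ : ∃ B : ℝ, B = ‖e‖ ^ 2 := ⟨_, rfl⟩
    have ht : ∀ t : ℝ, t ∈ Set.Ioc (0:ℝ) 1 →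
        0 ≤ t * A + t ^ 2 / 2 * B := by
      rw [hAdef, hBdef]
      intro t ht
      have hy := hp₂ (p₂ + t • e)
      have hg := hconv v p₂ t (1 - t) (le_of_lt ht.1) (by linarith [ht.2]) (by ring)
      have hcomb : p₂ + t • e = t • v + (1 - t) • p₂ := by
        rw [he]; module
      rw [← hcomb, hcv, hc₂, ← EReal.coe_mul, ← EReal.coe_mul, ← EReal.coe_add] at hg
      -- g (p₂ + t•e) is real and bounded
      have hyt : g (p₂ + t • e) ≠ ⊤ := by
        intro h; rw [h, top_le_iff] at hg; exact EReal.coe_ne_top _ hg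
      obtain ⟨cy, hcy⟩ : ∃ c : ℝ, g (p₂ + t • e) = (c : EReal) :=
        ⟨(g _).toReal, (EReal.coe_toReal hyt (hbot _)).symm⟩
      rw [hcy, EReal.coe_le_coe_iff] at hg
      rw [hcy, hc₂, ← EReal.coe_mul, ← EReal.coe_mul, ← EReal.coe_add, ← EReal.coe_add,
        EReal.coe_le_coe_iff] at hy
      have hnorm : ‖p₂ + t • e - β⁻¹ • x‖ ^ 2
          = ‖d‖ ^ 2 + 2 * (t * ⟪d, e⟫) + t ^ 2 * ‖e‖ ^ 2 := by
        have h1 : p₂ + t • e - β⁻¹ • x = d + t • e := by rw [hd]; module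
        rw [h1, norm_add_sq_real, real_inner_smul_right, norm_smul, mul_pow]
        simp [sq_abs]
      have hd2 : ‖p₂ - β⁻¹ • x‖ ^ 2 = ‖d‖ ^ 2 := by rw [hd]
      rw [hnorm, hd2] at hy
      have hmul : β⁻¹ * cy ≤ β⁻¹ * (t * cv + (1 - t) * c₂) :=
        mul_le_mul_of_nonneg_left hg (le_of_lt hβi)
      nlinarith [hy, hmul]
    -- pass to the limit t → 0⁺
    have hA : 0 ≤ A := by
      by_contra hA
      push_neg at hA
      have hB : 0 ≤ B := hBdef ▸ sq_nonneg _
      rcases eq_or_lt_of_le hB with hB0 | hB0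
      · have h1 := ht 1 ⟨one_pos, le_refl 1⟩
        rw [← hB0] at h1
        linarith
      · have htpos : 0 < min 1 (-A / B) := lt_min one_pos (div_pos (neg_pos.mpr hA) hB0)
        have ht1 : min 1 (-A / B) ≤ 1 := min_le_left _ _
        have htB : min 1 (-A / B) * B ≤ -A := by
          have h2 : min 1 (-A / B) ≤ -A / B := min_le_right _ _
          calc min 1 (-A / B) * B ≤ (-A / B) * B := by nlinarith
            _ = -A := by field_simp
        have h3 := ht _ ⟨htpos, ht1⟩
        have h4 : min 1 (-A / B) / 2 * (min 1 (-A / B) * B) ≤ min 1 (-A / B) / 2 * (-A) :=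
          mul_le_mul_of_nonneg_left htB (by positivity)
        nlinarith [mul_neg_of_pos_of_neg htpos hA]
    rw [hAdef] at hA
    -- convert to the claimed inequality using s = -β • d
    have hsd : s = (-β) • d := by
      rw [hs, hd, neg_smul, smul_sub, smul_smul, mul_inv_cancel₀ (ne_of_gt hβ), one_smul]
      module
    have hse : ⟪s, e⟫ = -β * ⟪d, e⟫ := by rw [hsd, real_inner_smul_left]
    rw [hse]
    have hA' : 0 ≤ β * ⟪d, e⟫ + (cv - c₂) := by
      have h := mul_nonneg hβ.le hA
      rw [mul_add, ← mul_assoc, mul_inv_cancel₀ (ne_of_gt hβ), one_mul] at h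
      linarith
    linarith
  -- Step 3 : gstar s = ⟪s, p₂⟫ - c₂
  have hstar_s : gstar s = ((⟪s, p₂⟫ - c₂ : ℝ) : EReal) := by
    rw [hgstar]
    apply le_antisymm
    · apply iSup_le
      intro v
      rcases eq_or_ne (g v) ⊤ with htop | htop
      · rw [htop, EReal.sub_top]; exact bot_le
      obtain ⟨cv, hcv⟩ : ∃ c : ℝ, g v = (c : EReal) :=
        ⟨(g v).toReal, (EReal.coe_toReal htop (hbot v)).symm⟩
      have hk := key v
      rw [hcv, EReal.coe_le_coe_iff] at hk
      rw [hcv, ← EReal.coe_sub, EReal.coe_le_coe_iff]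
      have : ⟪s, v - p₂⟫ = ⟪s, v⟫ - ⟪s, p₂⟫ := inner_sub_right s v p₂
      linarith [hk, this.symm.le, this.le]
    · have h := le_iSup (fun v => ((⟪s, v⟫ : ℝ) : EReal) - g v) p₂
      rw [hc₂, ← EReal.coe_sub] at h
      exact h
  -- Step 4 : gstar p₁ is real
  have hstar_p₁_top : gstar p₁ ≠ ⊤ := by
    intro htop
    have h1 := hp₁ s
    rw [htop, hstar_s, EReal.coe_mul_top_of_pos hβ, EReal.coe_add_top, ← EReal.coe_mul,
      ← EReal.coe_add, top_le_iff] at h1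
    exact EReal.coe_ne_top _ h1
  have hstar_p₁_bot : gstar p₁ ≠ ⊥ := by
    intro hbot'
    have h := le_iSup (fun v => ((⟪p₁, v⟫ : ℝ) : EReal) - g v) v₀
    rw [← hgstar, hbot', le_bot_iff, hc₀, ← EReal.coe_sub] at h
    exact EReal.coe_ne_bot _ h
  obtain ⟨c₁, hc₁⟩ : ∃ c : ℝ, gstar p₁ = (c : EReal) :=
    ⟨(gstar p₁).toReal, (EReal.coe_toReal hstar_p₁_top hstar_p₁_bot).symm⟩
  have hc₁low : ⟪p₁, p₂⟫ - c₂ ≤ c₁ := by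
    have h := le_iSup (fun v => ((⟪p₁, v⟫ : ℝ) : EReal) - g v) p₂
    rw [← hgstar, hc₁, hc₂, ← EReal.coe_sub, EReal.coe_le_coe_iff] at h
    exact h
  -- Step 5 : conclude
  have h5 := hp₁ s
  rw [hc₁, hstar_s, ← EReal.coe_mul, ← EReal.coe_mul, ← EReal.coe_add, ← EReal.coe_add,
    EReal.coe_le_coe_iff] at h5
  have hsx : ‖s - x‖ ^ 2 = β ^ 2 * ‖p₂‖ ^ 2 := by
    have h1 : s - x = (-β) • p₂ := by rw [hs]; module
    rw [h1, norm_smul]; simp [mul_pow, sq_abs]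
  have hsp₂ : ⟪s, p₂⟫ = ⟪x, p₂⟫ - β * ‖p₂‖ ^ 2 := by
    rw [hs, inner_sub_left, real_inner_smul_left, real_inner_self_eq_norm_sq]
  have hp₁s : ‖p₁ - s‖ ^ 2 = ‖p₁ - x‖ ^ 2 + 2 * (β * ⟪p₁ - x, p₂⟫) + β ^ 2 * ‖p₂‖ ^ 2 := by
    have h1 : p₁ - s = (p₁ - x) + β • p₂ := by rw [hs]; module
    rw [h1, norm_add_sq_real, real_inner_smul_right, norm_smul, mul_pow]
    simp [sq_abs]
  have hip : ⟪p₁ - x, p₂⟫ = ⟪p₁, p₂⟫ - ⟪x, p₂⟫ := inner_sub_left p₁ x p₂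
  have hmul' : β * (⟪p₁, p₂⟫ - c₂) ≤ β * c₁ := mul_le_mul_of_nonneg_left hc₁low hβ.le
  rw [hsx, hsp₂] at h5
  have hzero : ‖p₁ - s‖ ^ 2 ≤ 0 := by
    rw [hp₁s, hip]
    nlinarith [h5, hmul']
  have hps : p₁ = s := by
    have : ‖p₁ - s‖ ^ 2 = 0 := le_antisymm hzero (sq_nonneg _)
    have := pow_eq_zero_iff (n := 2) (by norm_num) |>.mp this
    rw [norm_eq_zero] at this
    exact sub_eq_zero.mp this
  rw [hps, hs]
  abel
end

section
/- The iteration F^{k+1} = (1-α) Ã F^k + α X, with 0 < α ≤ 1 and Ã symmetric with ‖Ã‖₂ ≤ 1 and αX fixed, is equivalent to one gradient descent step with stepsize α/2 on the objective F ↦ ‖F - X‖_F² + (1/α - 1)·tr(Fᵀ(I - Ã)F) started from F^k. -/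
open Matrix BigOperators
open scoped Matrix.Norms.L2Operator

/-!
Both parts of `J` are quadratic forms `F ↦ tr(Fᵀ M F)` with `M` symmetric (`M = I` at `F - X`,
and `M = I - Ã`). Along a line, `tr((F + tV)ᵀ M (F + tV))` is a polynomial of degree two in `t`
whose linear coefficient is `tr(Vᵀ M F) + tr(Fᵀ M V) = 2 tr((M F)ᵀ V)` by symmetry of `M`, and
`tr(Aᵀ B)` is the entrywise pairing `∑ᵢⱼ Aᵢⱼ Bᵢⱼ`; this identifies the gradient. The descent step
itself is the scalar identity `(α/2)·2(1/α - 1) = 1 - α`.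
-/

theorem hasDerivAt_quadratic_zero (a b c : ℝ) :
    HasDerivAt (fun t : ℝ => a + t * b + t ^ 2 * c) b 0 := by
  simpa using (((hasDerivAt_id (0 : ℝ)).mul_const b).const_add a).fun_add
    ((hasDerivAt_pow 2 (0 : ℝ)).mul_const c)

namespace Matrix

variable {m n R : Type*} [Fintype m] [Fintype n]

theorem sum_sum_mul_eq_trace_transpose_mul [AddCommMonoid R] [Mul R] (A B : Matrix m n R) :
    ∑ i, ∑ j, A i j * B i j = trace (Aᵀ * B) := by
  simp only [trace, diag, mul_apply, transpose_apply]
  exact Finset.sum_comm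

theorem IsSymm.trace_transpose_mul_mul_comm [CommSemiring R] {M : Matrix m m R} (hM : M.IsSymm)
    (F V : Matrix m n R) : trace (Fᵀ * (M * V)) = trace (Vᵀ * (M * F)) := by
  rw [← trace_transpose, transpose_mul, transpose_mul, transpose_transpose, hM.eq,
    Matrix.mul_assoc]

theorem trace_transpose_mul_mul_add_smul [CommRing R] (M : Matrix m m R) (F V : Matrix m n R)
    (t : R) :
    trace ((F + t • V)ᵀ * (M * (F + t • V))) = trace (Fᵀ * (M * F))
      + t * (trace (Vᵀ * (M * F)) + trace (Fᵀ * (M * V))) + t ^ 2 * trace (Vᵀ * (M * V)) := by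
  simp only [transpose_add, transpose_smul, Matrix.mul_add, Matrix.add_mul, Matrix.mul_smul,
    Matrix.smul_mul, trace_add, trace_smul, smul_eq_mul]
  ring

theorem IsSymm.hasDerivAt_trace_transpose_mul_mul_add_smul {M : Matrix m m ℝ} (hM : M.IsSymm)
    (F V : Matrix m n ℝ) :
    HasDerivAt (fun t : ℝ => trace ((F + t • V)ᵀ * (M * (F + t • V))))
      (2 * trace ((M * F)ᵀ * V)) 0 := by
  have hlin : trace (Vᵀ * (M * F)) + trace (Fᵀ * (M * V)) = 2 * trace ((M * F)ᵀ * V) := by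
    rw [hM.trace_transpose_mul_mul_comm F V, ← trace_transpose, transpose_mul, transpose_transpose]
    ring
  simp_rw [trace_transpose_mul_mul_add_smul, hlin]
  exact hasDerivAt_quadratic_zero _ _ _

end Matrix

theorem aggregation_is_gradient_descent_step_general
    (n d : ℕ) (α : ℝ) (hα0 : 0 < α)
    (At : Matrix (Fin n) (Fin n) ℝ) (hsymm : At.IsSymm)
    (X Fk : Matrix (Fin n) (Fin d) ℝ)
    (J : Matrix (Fin n) (Fin d) ℝ → ℝ)
    (hJ : ∀ F, J F = (∑ i, ∑ j, (F i j - X i j) ^ 2)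
        + (1 / α - 1) * Matrix.trace (Fᵀ * ((1 - At) * F)))
    (gradJ : Matrix (Fin n) (Fin d) ℝ → Matrix (Fin n) (Fin d) ℝ)
    (hgradJ : ∀ F, gradJ F = (2 : ℝ) • (F - X) + (2 * (1 / α - 1)) • ((1 - At) * F)) :
    (∀ F V : Matrix (Fin n) (Fin d) ℝ,
      HasDerivAt (fun t : ℝ => J (F + t • V)) (∑ i, ∑ j, gradJ F i j * V i j) 0) ∧
    (1 - α) • (At * Fk) + α • X = Fk - (α / 2) • gradJ Fk := by
  constructor
  · intro F V
    have hJ_line : (fun t : ℝ => J (F + t • V)) = fun t : ℝ =>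
        trace ((F - X + t • V)ᵀ * (F - X + t • V))
          + (1 / α - 1) * trace ((F + t • V)ᵀ * ((1 - At) * (F + t • V))) := by
      funext t
      rw [hJ, ← sum_sum_mul_eq_trace_transpose_mul (F - X + t • V)]
      simp only [sq, Matrix.add_apply, Matrix.sub_apply, add_sub_right_comm]
    have hsq := isSymm_one.hasDerivAt_trace_transpose_mul_mul_add_smul (F - X) V
    simp only [Matrix.one_mul] at hsq
    rw [hJ_line, hgradJ, sum_sum_mul_eq_trace_transpose_mul]
    refine (hsq.fun_add
      (((isSymm_one.sub hsymm).hasDerivAt_trace_transpose_mul_mul_add_smul F V).const_mul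
        (1 / α - 1))).congr_deriv ?_
    simp only [transpose_add, transpose_smul, Matrix.add_mul, Matrix.smul_mul, trace_add,
      trace_smul, smul_eq_mul]
    ring
  · have hα : α ≠ 0 := hα0.ne'
    have hscalar : α / 2 * (2 * (1 / α - 1)) = 1 - α := by
      field_simp
    rw [hgradJ, smul_add, smul_smul, smul_smul, hscalar, Matrix.sub_mul, Matrix.one_mul]
    module

/-- The iteration `F^{k+1} = (1-α)ÃF^k + αX` (0 < α ≤ 1, `Ã` symmetric with
`‖Ã‖₂ ≤ 1`) is one gradient descent step with stepsize `α/2` on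
`J(F) = ‖F - X‖_F² + (1/α - 1)tr(Fᵀ(I - Ã)F)` started from `F^k`: the map
`gradJ F = 2(F - X) + 2(1/α - 1)(I - Ã)F` is the gradient of `J` (characterized via
directional derivatives), and `(1-α)ÃF^k + αX = F^k - (α/2)·gradJ(F^k)`. -/
theorem aggregation_is_gradient_descent_step
    (n d : ℕ) (α : ℝ) (hα0 : 0 < α) (hα1 : α ≤ 1)
    (At : Matrix (Fin n) (Fin n) ℝ) (hsymm : At.IsSymm) (hnorm : ‖At‖ ≤ 1)
    (X Fk : Matrix (Fin n) (Fin d) ℝ)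
    (J : Matrix (Fin n) (Fin d) ℝ → ℝ)
    (hJ : ∀ F, J F = (∑ i, ∑ j, (F i j - X i j) ^ 2)
        + (1 / α - 1) * Matrix.trace (Fᵀ * ((1 - At) * F)))
    (gradJ : Matrix (Fin n) (Fin d) ℝ → Matrix (Fin n) (Fin d) ℝ)
    (hgradJ : ∀ F, gradJ F = (2 : ℝ) • (F - X) + (2 * (1 / α - 1)) • ((1 - At) * F)) :
    (∀ F V : Matrix (Fin n) (Fin d) ℝ,
      HasDerivAt (fun t : ℝ => J (F + t • V)) (∑ i, ∑ j, gradJ F i j * V i j) 0) ∧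
    (1 - α) • (At * Fk) + α • X = Fk - (α / 2) • gradJ Fk :=
  aggregation_is_gradient_descent_step_general n d α hα0 At hsymm X Fk J hJ gradJ hgradJ
end
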